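/- Let P be a Markov kernel on ℝ^ℓ, v : ℝ^ℓ → [1,∞) continuous, and π an invariant probability measure for P with π(v) < ∞, satisfying: (v-uniform ergodicity) there are b0 < ∞ and ρ0 < 1 such that |P^t f(x) − π(f)| ≤ b0 ρ0^t ‖f‖_v v(x) for every measurable f with ‖f‖_v < ∞; (boundedness) for every t ≥ 1 there is M_t < ∞ with: for every f ∈ L_v^1, P^t f ∈ L_v^1 and ‖P^t f‖_{v,1} ≤ M_t ‖f‖_{v,1}; (separability) for some t1 ≥ 1 and every ε > 0 there exist N, functions s_1,…,s_N ∈ L_v^1 and finite signed measures ν_1,…,ν_N with ‖ν_i‖_v < ∞ such that ‖P^{t1} f − Σ_{i=1}^N s_i · ν_i(f)‖_{v,1} ≤ ε for all f ∈ L_v^1 with ‖f‖_{v,1} ≤ 1. Then for every c ∈ L_v^1 the series h(x) = Σ_{t=0}^∞ (P^t c(x) − π(c)) converges for every x, defines a function h ∈ L_v^1 solving Poisson's equation h − Ph = c − π(c), and the gradient of h is given by the pointwise-convergent series ∇h(x) = Σ_{t=0}^∞ ∇(P^t c)(x). -/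

import Mathlib

open MeasureTheory Filter
open scoped ENNReal ProbabilityTheory

noncomputable section

/-- Partial derivative `∂ᵢ f` of a function on `ℝ^ℓ`. -/
noncomputable def pd {ℓ : ℕ} (i : Fin ℓ) (f : (Fin ℓ → ℝ) → ℝ) (x : Fin ℓ → ℝ) : ℝ :=
  fderiv ℝ f x (Pi.single i 1)

/-- Weighted sup norm `‖f‖_w`. -/
noncomputable def wnorm {ℓ : ℕ} (w f : (Fin ℓ → ℝ) → ℝ) : ℝ := ⨆ x, |f x| / w x

/-- Weighted Sobolev norm `‖f‖_{w,1}`. -/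
noncomputable def wnorm1 {ℓ : ℕ} (w f : (Fin ℓ → ℝ) → ℝ) : ℝ :=
  max (wnorm w f) (⨆ i : Fin ℓ, wnorm w (pd i f))

/-- Membership in the weighted Sobolev space `L_w^1`. -/
def MemLw1 {ℓ : ℕ} (w f : (Fin ℓ → ℝ) → ℝ) : Prop :=
  ContDiff ℝ 1 f ∧ (∃ M : ℝ, ∀ x, |f x| ≤ M * w x) ∧
    ∀ i : Fin ℓ, ∃ M : ℝ, ∀ x, |pd i f x| ≤ M * w x

/-- `t`-fold composition of a Markov kernel. -/
noncomputable def kerIter {X : Type*} [MeasurableSpace X]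
    (P : ProbabilityTheory.Kernel X X) : ℕ → ProbabilityTheory.Kernel X X
  | 0 => ProbabilityTheory.Kernel.id
  | t + 1 => P ∘ₖ kerIter P t

/-- `P^t f (x) = ∫ f(y) P^t(x, dy)`. -/
noncomputable def kerPt {X : Type*} [MeasurableSpace X]
    (P : ProbabilityTheory.Kernel X X) (t : ℕ) (f : X → ℝ) (x : X) : ℝ :=
  ∫ y, f y ∂(kerIter P t x)

/-- `π` is an invariant probability measure for the kernel `P`. -/
def KerInvariant {X : Type*} [MeasurableSpace X]
    (P : ProbabilityTheory.Kernel X X) (π : Measure X) : Prop :=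
  ∀ A : Set X, MeasurableSet A → ∫⁻ x, P x A ∂π = π A

end

open MeasureTheory

/- ### Auxiliary lemmas -/

section Helpers
open ProbabilityTheory

variable {X : Type*} [MeasurableSpace X]

instance kerIter.instIsMarkovKernel (P : Kernel X X) [IsMarkovKernel P] (n : ℕ) :
    IsMarkovKernel (kerIter P n) := by
  induction n with
  | zero => exact (by infer_instance : IsMarkovKernel (Kernel.id : Kernel X X))
  | succ n ih => exact (by rw [kerIter]; infer_instance)

lemma kerIter_add (P : Kernel X X) [IsMarkovKernel P] (m n : ℕ) :
    kerIter P (m + n) = kerIter P m ∘ₖ kerIter P n := by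
  induction m with
  | zero => simp only [Nat.zero_add, kerIter]; exact (Kernel.id_comp (kerIter P n)).symm
  | succ m ih => rw [Nat.succ_add, kerIter, ih, kerIter, Kernel.comp_assoc]

lemma kerIter_one (P : Kernel X X) [IsMarkovKernel P] : kerIter P 1 = P := by
  rw [kerIter, kerIter]; exact Kernel.comp_id P

/-- Bochner integral against a composition of kernels. -/
lemma integral_kernel_comp (η κ : Kernel X X) [IsMarkovKernel η] [IsMarkovKernel κ] (a : X)
    {g : X → ℝ} (hg : Measurable g) (hint : Integrable g ((η ∘ₖ κ) a)) :
    ∫ y, g y ∂(η ∘ₖ κ) a = ∫ x, ∫ y, g y ∂η x ∂κ a := by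
  have hgp : Measurable fun y => ENNReal.ofReal (g y) := hg.ennreal_ofReal
  have hgn : Measurable fun y => ENNReal.ofReal (-g y) := hg.neg.ennreal_ofReal
  set A : X → ℝ≥0∞ := fun x => ∫⁻ y, ENNReal.ofReal (g y) ∂η x with hA
  set B : X → ℝ≥0∞ := fun x => ∫⁻ y, ENNReal.ofReal (-g y) ∂η x with hB
  have hAm : Measurable A := Measurable.lintegral_kernel hgp
  have hBm : Measurable B := Measurable.lintegral_kernel hgn
  have hnorm : ∫⁻ y, ‖g y‖₊ ∂((η ∘ₖ κ) a) ≠ ⊤ := hint.2.ne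
  have hle_p : ∀ y, ENNReal.ofReal (g y) ≤ ‖g y‖₊ := fun y => by
    rw [← enorm_eq_nnnorm, ← ofReal_norm]; exact ENNReal.ofReal_le_ofReal (le_abs_self _)
  have hle_n : ∀ y, ENNReal.ofReal (-g y) ≤ ‖g y‖₊ := fun y => by
    rw [← enorm_eq_nnnorm, ← ofReal_norm]; exact ENNReal.ofReal_le_ofReal ((neg_le_abs _))
  have hAκ : ∫⁻ x, A x ∂κ a ≠ ⊤ := by
    rw [hA, ← Kernel.lintegral_comp η κ a hgp]
    exact ne_top_of_le_ne_top hnorm (lintegral_mono hle_p)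
  have hBκ : ∫⁻ x, B x ∂κ a ≠ ⊤ := by
    rw [hB, ← Kernel.lintegral_comp η κ a hgn]
    exact ne_top_of_le_ne_top hnorm (lintegral_mono hle_n)
  have hAae : ∀ᵐ x ∂κ a, A x < ⊤ := ae_lt_top hAm hAκ
  have hBae : ∀ᵐ x ∂κ a, B x < ⊤ := ae_lt_top hBm hBκ
  have hinner : ∀ᵐ x ∂κ a, ∫ y, g y ∂η x = (A x).toReal - (B x).toReal := by
    filter_upwards [hAae, hBae] with x hAx hBx
    have hgint : Integrable g (η x) := by
      constructor
      · exact hg.aestronglyMeasurable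
      · rw [HasFiniteIntegral]
        have : ∫⁻ y, ‖g y‖₊ ∂η x ≤ A x + B x := by
          rw [hA, hB, ← lintegral_add_left (hgp)]
          refine lintegral_mono fun y => ?_
          rw [← enorm_eq_nnnorm, ← ofReal_norm]
          rcases le_total 0 (g y) with h | h
          · calc ENNReal.ofReal ‖g y‖ = ENNReal.ofReal (g y) := by
                  rw [Real.norm_eq_abs, abs_of_nonneg h]
              _ ≤ _ := le_self_add
          · calc ENNReal.ofReal ‖g y‖ = ENNReal.ofReal (-g y) := by
                  rw [Real.norm_eq_abs, abs_of_nonpos h]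
              _ ≤ _ := le_add_self
        exact lt_of_le_of_lt this (ENNReal.add_lt_top.2 ⟨hAx, hBx⟩)
    rw [integral_eq_lintegral_pos_part_sub_lintegral_neg_part hgint]
  rw [integral_congr_ae hinner]
  have hAint : Integrable (fun x => (A x).toReal) (κ a) :=
    integrable_toReal_of_lintegral_ne_top hAm.aemeasurable hAκ
  have hBint : Integrable (fun x => (B x).toReal) (κ a) :=
    integrable_toReal_of_lintegral_ne_top hBm.aemeasurable hBκ
  rw [integral_sub hAint hBint,
    integral_toReal hAm.aemeasurable hAae, integral_toReal hBm.aemeasurable hBae,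
    integral_eq_lintegral_pos_part_sub_lintegral_neg_part hint,
    Kernel.lintegral_comp η κ a hgp, Kernel.lintegral_comp η κ a hgn]

/-- Integrability from a weighted bound. -/
lemma integrable_of_wbound {μ : Measure X} {f v : X → ℝ} (hf : AEStronglyMeasurable f μ)
    (hv : Measurable v) (M : ℝ) (hM : 0 ≤ M) (hb : ∀ x, |f x| ≤ M * v x)
    (hfin : ∫⁻ x, ENNReal.ofReal (v x) ∂μ ≠ ⊤) : Integrable f μ := by
  constructor
  · exact hf
  · rw [HasFiniteIntegral]
    have : ∫⁻ x, ‖f x‖₊ ∂μ ≤ ENNReal.ofReal M * ∫⁻ x, ENNReal.ofReal (v x) ∂μ := by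
      rw [← lintegral_const_mul _ hv.ennreal_ofReal]
      refine lintegral_mono fun x => ?_
      rw [← enorm_eq_nnnorm, ← ofReal_norm, Real.norm_eq_abs, ← ENNReal.ofReal_mul hM]
      exact ENNReal.ofReal_le_ofReal (hb x)
    exact lt_of_le_of_lt this (ENNReal.mul_lt_top ENNReal.ofReal_lt_top hfin.lt_top)

end Helpers

noncomputable def seqA (base : ℕ → ℝ) (t1 : ℕ) (C r : ℝ) : ℕ → ℝ
  | t => if t < t1 ∨ t1 = 0 then base t
    else (1/2) * seqA base t1 C r (t - t1) + C * r ^ (t - t1)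
  decreasing_by
    rename_i h
    push_neg at h
    exact Nat.sub_lt (lt_of_lt_of_le (Nat.pos_of_ne_zero h.2) h.1) (Nat.pos_of_ne_zero h.2)

lemma seqA_lt {base : ℕ → ℝ} {t1 : ℕ} {C r : ℝ} {t : ℕ} (h : t < t1) :
    seqA base t1 C r t = base t := by
  rw [seqA]; simp [h]

lemma seqA_add {base : ℕ → ℝ} {t1 : ℕ} {C r : ℝ} (h : 1 ≤ t1) (t : ℕ) :
    seqA base t1 C r (t + t1) = (1/2) * seqA base t1 C r t + C * r ^ t := by
  rw [seqA]
  have h1 : ¬ (t + t1 < t1 ∨ t1 = 0) := by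
    push_neg
    exact ⟨le_add_self, by omega⟩
  simp only [h1, if_false, Nat.add_sub_cancel]

lemma seqA_pos {base : ℕ → ℝ} {t1 : ℕ} {C r : ℝ} (hbase : ∀ t, 0 < base t)
    (hC : 0 ≤ C) (hr : 0 ≤ r) : ∀ t, 0 < seqA base t1 C r t := by
  intro t
  induction t using Nat.strong_induction_on with
  | _ t ih =>
    rw [seqA]
    split
    · exact hbase t
    · rename_i h
      push_neg at h
      have ht1 : 0 < t1 := Nat.pos_of_ne_zero h.2
      have ht : t - t1 < t := Nat.sub_lt (lt_of_lt_of_le ht1 h.1) ht1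
      have := ih _ ht
      positivity

lemma seqA_summable {base : ℕ → ℝ} {t1 : ℕ} {C r : ℝ} (hbase : ∀ t, 0 ≤ base t)
    (ht1 : 1 ≤ t1) (hC : 0 ≤ C) (hr0 : 0 ≤ r) (hr1 : r < 1) :
    Summable (seqA base t1 C r) := by
  set A := seqA base t1 C r with hAdef
  have hA0 : ∀ t, 0 ≤ A t := by
    intro t
    induction t using Nat.strong_induction_on with
    | _ t ih =>
      rw [hAdef, seqA]
      split
      · exact hbase t
      · rename_i h
        push_neg at h
        have ht1' : 0 < t1 := Nat.pos_of_ne_zero h.2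
        have ht : t - t1 < t := Nat.sub_lt (lt_of_lt_of_le ht1' h.1) ht1'
        have := ih _ ht
        positivity
  set T : ℝ := ∑ t ∈ Finset.range t1, A t with hT
  have hgeom : ∀ n : ℕ, ∑ k ∈ Finset.range n, r ^ k ≤ (1 - r)⁻¹ := by
    intro n
    have := Summable.sum_le_tsum (Finset.range n) (fun i _ => pow_nonneg hr0 i)
      (summable_geometric_of_lt_one hr0 hr1)
    rwa [tsum_geometric_of_lt_one hr0 hr1] at this
  have key : ∀ n, ∑ t ∈ Finset.range n, A t ≤ 2 * (T + C * (1 - r)⁻¹) := by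
    intro n
    have h1 : ∑ t ∈ Finset.range n, A t ≤ ∑ t ∈ Finset.range (t1 + n), A t := by
      refine Finset.sum_le_sum_of_subset_of_nonneg ?_ (fun i _ _ => hA0 i)
      exact Finset.range_subset_range.2 (by omega)
    have h2 : ∑ t ∈ Finset.range (t1 + n), A t
        = T + ∑ k ∈ Finset.range n, A (t1 + k) := by
      rw [Finset.sum_range_add]
    have h3 : ∀ k, A (t1 + k) = (1/2) * A k + C * r ^ k := by
      intro k; rw [add_comm]; exact seqA_add ht1 k
    have h4 : ∑ k ∈ Finset.range n, A (t1 + k)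
        = (1/2) * (∑ k ∈ Finset.range n, A k) + C * ∑ k ∈ Finset.range n, r ^ k := by
      simp only [h3]
      rw [Finset.sum_add_distrib, ← Finset.mul_sum, ← Finset.mul_sum]
    have h5 : C * ∑ k ∈ Finset.range n, r ^ k ≤ C * (1 - r)⁻¹ :=
      mul_le_mul_of_nonneg_left (hgeom n) hC
    nlinarith [hA0 n, h1, h2]
  exact summable_of_sum_range_le hA0 key

lemma opnorm_le_sum_pd {ℓ : ℕ} (L : (Fin ℓ → ℝ) →L[ℝ] ℝ) :
    ‖L‖ ≤ ∑ i, |L (Pi.single i 1)| := by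
  refine ContinuousLinearMap.opNorm_le_bound _
    (Finset.sum_nonneg fun i _ => abs_nonneg _) fun y => ?_
  have hy : y = ∑ i, y i • (Pi.single i 1 : Fin ℓ → ℝ) := by
    funext j
    simp only [Finset.sum_apply, Pi.smul_apply, Pi.single_apply, smul_eq_mul]
    rw [Finset.sum_congr rfl (fun i _ => by rw [mul_ite, mul_one, mul_zero])]
    simp [eq_comm]
  calc ‖L y‖ = ‖∑ i, y i • L (Pi.single i 1)‖ := by
        conv_lhs => rw [hy]
        rw [map_sum]
        simp only [ContinuousLinearMap.map_smul]
      _ ≤ ∑ i, ‖y i • L (Pi.single i 1)‖ := norm_sum_le _ _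
      _ ≤ ∑ i, |L (Pi.single i 1)| * ‖y‖ := by
        refine Finset.sum_le_sum fun i _ => ?_
        rw [norm_smul, Real.norm_eq_abs (y i), Real.norm_eq_abs, mul_comm]
        have h1 : |y i| ≤ ‖y‖ := by
          rw [← Real.norm_eq_abs]; exact norm_le_pi_norm y i
        exact mul_le_mul_of_nonneg_left h1 (abs_nonneg _)
      _ = (∑ i, |L (Pi.single i 1)|) * ‖y‖ := by rw [← Finset.sum_mul]

set_option maxHeartbeats 2000000 in
/-- Theorem 3.5 / `t:MainGeneral` (ii): if in addition the
kernel maps `L_v^1` to itself boundedly for every `t ≥ 1`, then for every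
`c ∈ L_v^1` the function `h = Σ_t (P^t c − π(c))` is a well-defined element of
`L_v^1` solving Poisson's equation, with gradient `∇h = Σ_t ∇(P^t c)`. -/
theorem stmt10 {ℓ : ℕ} (hℓ : 1 ≤ ℓ)
    (P : ProbabilityTheory.Kernel (Fin ℓ → ℝ) (Fin ℓ → ℝ))
    [ProbabilityTheory.IsMarkovKernel P]
    (v : (Fin ℓ → ℝ) → ℝ) (hv_cont : Continuous v) (hv_one : ∀ x, 1 ≤ v x)
    (π : Measure (Fin ℓ → ℝ)) [IsProbabilityMeasure π]
    (hπinv : KerInvariant P π)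
    (hπv : (∫⁻ x, ENNReal.ofReal (v x) ∂π) ≠ ⊤)
    -- v-uniform ergodicity
    (b0 ρ0 : ℝ) (hρ0 : ρ0 < 1)
    (hErg : ∀ f : (Fin ℓ → ℝ) → ℝ, Measurable f →
      (∃ M : ℝ, ∀ x, |f x| ≤ M * v x) →
      ∀ (t : ℕ) x, |kerPt P t f x - ∫ y, f y ∂π| ≤ b0 * ρ0 ^ t * wnorm v f * v x)
    -- boundedness on L_v^1 for every t ≥ 1
    (hBdd : ∀ t : ℕ, 1 ≤ t → ∃ Mt : ℝ, ∀ f : (Fin ℓ → ℝ) → ℝ, MemLw1 v f →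
      MemLw1 v (kerPt P t f) ∧
      ∀ x, |kerPt P t f x| ≤ Mt * wnorm1 v f * v x ∧
        ∀ i : Fin ℓ, |pd i (kerPt P t f) x| ≤ Mt * wnorm1 v f * v x)
    -- separability of P^{t1} in L_v^1, for some t1 ≥ 1
    (t1 : ℕ) (ht1 : 1 ≤ t1)
    (hSep : ∀ ε : ℝ, 0 < ε →
      ∃ (N : ℕ) (s : Fin N → (Fin ℓ → ℝ) → ℝ)
        (νp νm : Fin N → Measure (Fin ℓ → ℝ)),
        (∀ i, MemLw1 v (s i)) ∧
        (∀ i, IsFiniteMeasure (νp i) ∧ IsFiniteMeasure (νm i) ∧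
          (∫⁻ x, ENNReal.ofReal (v x) ∂(νp i)) ≠ ⊤ ∧
          (∫⁻ x, ENNReal.ofReal (v x) ∂(νm i)) ≠ ⊤) ∧
        ∀ f : (Fin ℓ → ℝ) → ℝ, MemLw1 v f → (∀ x, |f x| ≤ v x) →
          (∀ (i : Fin ℓ) x, |pd i f x| ≤ v x) →
          ∀ x,
            |kerPt P t1 f x -
              ∑ i, s i x * ((∫ y, f y ∂(νp i)) - ∫ y, f y ∂(νm i))| ≤ ε * v x ∧
            ∀ j : Fin ℓ,
              |pd j (fun z => kerPt P t1 f z -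
                ∑ i, s i z * ((∫ y, f y ∂(νp i)) - ∫ y, f y ∂(νm i))) x| ≤ ε * v x) :
    ∀ c : (Fin ℓ → ℝ) → ℝ, MemLw1 v c →
      (∀ x, Summable fun t : ℕ => kerPt P t c x - ∫ y, c y ∂π) ∧
      (let h : (Fin ℓ → ℝ) → ℝ := fun x => ∑' t : ℕ, (kerPt P t c x - ∫ y, c y ∂π)
       MemLw1 v h ∧
       (∀ x, h x - ∫ y, h y ∂(P x) = c x - ∫ y, c y ∂π) ∧
       ∀ x (i : Fin ℓ), HasSum (fun t : ℕ => pd i (kerPt P t c) x) (pd i h x)) := by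
  intro c hc
  have hvpos : ∀ x, 0 < v x := fun x => lt_of_lt_of_le one_pos (hv_one x)
  have hvm : Measurable v := hv_cont.measurable
  have hccont : Continuous c := hc.1.continuous
  have hcmeas : Measurable c := hccont.measurable
  obtain ⟨Mc, hMc⟩ := hc.2.1
  set πc : ℝ := ∫ y, c y ∂π with hπc
  set g : ℕ → (Fin ℓ → ℝ) → ℝ := fun t x => kerPt P t c x - πc with hgdef
  -- Step A : finiteness of ∫⁻ v along the iterated kernel
  have hVfin : ∀ (n : ℕ) (x : Fin ℓ → ℝ),
      ∫⁻ y, ENNReal.ofReal (v y) ∂(kerIter P n x) ≠ ⊤ := by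
    intro n x
    by_contra htop
    set μ := kerIter P n x with hμ
    have hvintπ : Integrable v π := integrable_of_wbound hv_cont.aestronglyMeasurable hvm 1
      zero_le_one (fun x => by rw [abs_of_pos (hvpos x), one_mul]) hπv
    set R : ℝ := |b0 * ρ0 ^ n| * v x + ∫ y, v y ∂π with hR
    have hR0 : 0 ≤ R := add_nonneg (mul_nonneg (abs_nonneg _) (hvpos x).le)
      (integral_nonneg fun y => (hvpos y).le)
    -- each truncation has integral bounded by R
    have hbd : ∀ k : ℕ, (∫⁻ y, ENNReal.ofReal (min (v y) k) ∂μ).toReal ≤ R := by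
      intro k
      set φ : (Fin ℓ → ℝ) → ℝ := fun y => min (v y) k with hφ
      have hφc : Continuous φ := hv_cont.min continuous_const
      have hφ0 : ∀ y, 0 ≤ φ y := fun y => le_min (hvpos y).le (Nat.cast_nonneg k)
      have hφv : ∀ y, |φ y| ≤ 1 * v y := fun y => by
        rw [abs_of_nonneg (hφ0 y), one_mul]; exact min_le_left _ _
      have hwφ0 : 0 ≤ wnorm v φ :=
        Real.iSup_nonneg fun y => div_nonneg (abs_nonneg _) (hvpos y).le
      have hwφ1 : wnorm v φ ≤ 1 := by
        refine Real.iSup_le (fun y => ?_) zero_le_one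
        rw [div_le_one (hvpos y), abs_of_nonneg (hφ0 y)]
        exact min_le_left _ _
      have herg := hErg φ hφc.measurable ⟨1, hφv⟩ n x
      have herg' : |kerPt P n φ x - ∫ y, φ y ∂π| ≤ |b0 * ρ0 ^ n| * v x := by
        refine herg.trans ?_
        rcases le_total 0 (b0 * ρ0 ^ n) with hsgn | hsgn
        · calc b0 * ρ0 ^ n * wnorm v φ * v x ≤ b0 * ρ0 ^ n * 1 * v x := by
                refine mul_le_mul_of_nonneg_right ?_ (hvpos x).le
                exact mul_le_mul_of_nonneg_left hwφ1 hsgn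
            _ ≤ |b0 * ρ0 ^ n| * v x := by
                rw [mul_one]
                exact mul_le_mul_of_nonneg_right (le_abs_self _) (hvpos x).le
        · have h1 : b0 * ρ0 ^ n * wnorm v φ * v x ≤ 0 :=
            mul_nonpos_of_nonpos_of_nonneg (mul_nonpos_of_nonpos_of_nonneg hsgn hwφ0)
              (hvpos x).le
          exact h1.trans (mul_nonneg (abs_nonneg _) (hvpos x).le)
      have hφπ : ∫ y, φ y ∂π ≤ ∫ y, v y ∂π := by
        refine integral_mono ?_ hvintπ (fun y => min_le_left _ _)
        exact integrable_of_wbound hφc.aestronglyMeasurable hvm 1 zero_le_one hφv hπv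
      have hφμ : ∫ y, φ y ∂μ ≤ R := by
        have h1 : kerPt P n φ x = ∫ y, φ y ∂μ := rfl
        have h2 := abs_le.1 herg'
        rw [h1] at h2
        have := h2.2
        rw [hR]
        linarith [hφπ]
      have heq : ∫ y, φ y ∂μ = (∫⁻ y, ENNReal.ofReal (φ y) ∂μ).toReal := by
        exact integral_eq_lintegral_of_nonneg_ae (Eventually.of_forall hφ0)
          hφc.aestronglyMeasurable
      rw [← heq]
      exact hφμ
    -- monotone convergence forces a contradiction
    have hmono : Monotone (fun k : ℕ => fun y => ENNReal.ofReal (min (v y) k)) := by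
      intro k k' hk y
      exact ENNReal.ofReal_le_ofReal (min_le_min le_rfl (Nat.cast_le.2 hk))
    have hmeas : ∀ k : ℕ, Measurable fun y => ENNReal.ofReal (min (v y) k) :=
      fun k => (hvm.min measurable_const).ennreal_ofReal
    have hsup : ∫⁻ y, ⨆ k : ℕ, ENNReal.ofReal (min (v y) k) ∂μ
        = ⨆ k : ℕ, ∫⁻ y, ENNReal.ofReal (min (v y) k) ∂μ := lintegral_iSup hmeas hmono
    have hptw : ∀ y, (⨆ k : ℕ, ENNReal.ofReal (min (v y) k)) = ENNReal.ofReal (v y) := by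
      intro y
      apply le_antisymm
      · exact iSup_le fun k => ENNReal.ofReal_le_ofReal (min_le_left _ _)
      · have : min (v y) (⌈v y⌉₊ : ℝ) = v y := min_eq_left (Nat.le_ceil _)
        calc ENNReal.ofReal (v y) = ENNReal.ofReal (min (v y) (⌈v y⌉₊ : ℝ)) := by rw [this]
          _ ≤ _ := le_iSup (fun k : ℕ => ENNReal.ofReal (min (v y) k)) (⌈v y⌉₊)
    have htop' : (⨆ k : ℕ, ∫⁻ y, ENNReal.ofReal (min (v y) k) ∂μ) = ⊤ := by
      rw [← hsup]
      rw [← htop]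
      exact lintegral_congr fun y => hptw y
    obtain ⟨k, hk⟩ : ∃ k : ℕ, ENNReal.ofReal R < ∫⁻ y, ENNReal.ofReal (min (v y) k) ∂μ := by
      have : ENNReal.ofReal R < ⨆ k : ℕ, ∫⁻ y, ENNReal.ofReal (min (v y) k) ∂μ := by
        rw [htop']; exact ENNReal.ofReal_lt_top
      exact lt_iSup_iff.1 this
    have hfin : ∫⁻ y, ENNReal.ofReal (min (v y) k) ∂μ ≠ ⊤ := by
      have hle : ∫⁻ y, ENNReal.ofReal (min (v y) k) ∂μ ≤ ENNReal.ofReal k := by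
        calc ∫⁻ y, ENNReal.ofReal (min (v y) k) ∂μ
            ≤ ∫⁻ _, ENNReal.ofReal k ∂μ :=
              lintegral_mono fun y => ENNReal.ofReal_le_ofReal (min_le_right _ _)
          _ = ENNReal.ofReal k := by
              rw [lintegral_const]
              simp [measure_univ]
      exact ne_top_of_le_ne_top ENNReal.ofReal_ne_top hle
    have : R < (∫⁻ y, ENNReal.ofReal (min (v y) k) ∂μ).toReal := by
      have := (ENNReal.toReal_lt_toReal ENNReal.ofReal_ne_top hfin).2 hk
      rwa [ENNReal.toReal_ofReal hR0] at this
    exact absurd (hbd k) (not_le.2 this)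
  -- integrability of weighted-bounded functions along the chain
  have hker_int : ∀ (F : (Fin ℓ → ℝ) → ℝ), Continuous F → ∀ (M : ℝ), 0 ≤ M →
      (∀ y, |F y| ≤ M * v y) → ∀ (n : ℕ) (x : Fin ℓ → ℝ), Integrable F (kerIter P n x) :=
    fun F hFc M hM hb n x =>
      integrable_of_wbound hFc.aestronglyMeasurable hvm M hM hb (hVfin n x)
  -- t = 0
  have hker0 : ∀ F : (Fin ℓ → ℝ) → ℝ, Continuous F → kerPt P 0 F = F := by
    intro F hF
    funext x
    show ∫ y, F y ∂(kerIter P 0 x) = F x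
    rw [show kerIter P 0 = ProbabilityTheory.Kernel.id from rfl,
      ProbabilityTheory.Kernel.id_apply]
    exact integral_dirac' F x hF.stronglyMeasurable
  -- Chapman-Kolmogorov
  have hchap : ∀ (m n : ℕ) (F : (Fin ℓ → ℝ) → ℝ), Continuous F → ∀ (M : ℝ), 0 ≤ M →
      (∀ y, |F y| ≤ M * v y) → ∀ x,
      kerPt P (m + n) F x = ∫ y, kerPt P m F y ∂(kerIter P n x) := by
    intro m n F hFc M hM hb x
    show ∫ y, F y ∂(kerIter P (m + n) x) = _
    rw [kerIter_add P m n]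
    exact integral_kernel_comp (kerIter P m) (kerIter P n) x hFc.measurable
      (by
        rw [← kerIter_add P m n]
        exact hker_int F hFc M hM hb (m + n) x)
  -- Base bounds, positivity and smoothness for every t
  have hbase0 : ∀ t : ℕ, MemLw1 v (g t) ∧
      ∃ K : ℝ, 0 < K ∧ (∀ x, |g t x| ≤ K * v x) ∧ ∀ i x, |pd i (g t) x| ≤ K * v x := by
    intro t
    rcases Nat.eq_zero_or_pos t with ht | ht
    · subst ht
      have hg0 : g 0 = fun x => c x - πc := by
        rw [hgdef]
        simp only [hker0 c hccont]
      obtain ⟨Mpd, hMpd⟩ : ∃ Mpd : Fin ℓ → ℝ, ∀ i x, |pd i c x| ≤ Mpd i * v x := by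
        choose Mpd hMpd using hc.2.2
        exact ⟨Mpd, hMpd⟩
      set K : ℝ := |Mc| + (∑ i, |Mpd i|) + |πc| + 1 with hK
      have hK0 : 0 < K := by rw [hK]; positivity
      have hpd : ∀ i x, pd i (g 0) x = pd i c x := by
        intro i x
        rw [hg0]
        exact congrFun (congrArg _ (fderiv_sub_const πc)) _
      refine ⟨?_, K, hK0, ?_, ?_⟩
      · refine ⟨by rw [hg0]; exact hc.1.sub contDiff_const, ⟨K, ?_⟩, fun i => ⟨K, ?_⟩⟩
        · intro x
          rw [hg0]
          have h1 : |c x - πc| ≤ |c x| + |πc| := abs_sub _ _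
          have h2 : |πc| ≤ |πc| * v x := le_mul_of_one_le_right (abs_nonneg _) (hv_one x)
          have h3 : |c x| ≤ |Mc| * v x :=
            (hMc x).trans (mul_le_mul_of_nonneg_right (le_abs_self _) (hvpos x).le)
          have h4 : 0 ≤ (∑ i, |Mpd i|) * v x :=
            mul_nonneg (Finset.sum_nonneg fun _ _ => abs_nonneg _) (hvpos x).le
          have h5 : 0 < 1 * v x := by rw [one_mul]; exact hvpos x
          rw [hK]; nlinarith
        · intro x
          rw [hpd i x]
          have h3 : |pd i c x| ≤ |Mpd i| * v x :=
            (hMpd i x).trans (mul_le_mul_of_nonneg_right (le_abs_self _) (hvpos x).le)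
          have h4 : |Mpd i| ≤ ∑ j, |Mpd j| :=
            Finset.single_le_sum (fun j _ => abs_nonneg (Mpd j)) (Finset.mem_univ i)
          have h5 : 0 ≤ (|Mc| + |πc| + 1) * v x := mul_nonneg (by positivity) (hvpos x).le
          rw [hK]; nlinarith [(hvpos x)]
      · intro x
        rw [hg0]
        have h1 : |c x - πc| ≤ |c x| + |πc| := abs_sub _ _
        have h2 : |πc| ≤ |πc| * v x := le_mul_of_one_le_right (abs_nonneg _) (hv_one x)
        have h3 : |c x| ≤ |Mc| * v x :=
          (hMc x).trans (mul_le_mul_of_nonneg_right (le_abs_self _) (hvpos x).le)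
        have h4 : 0 ≤ (∑ i, |Mpd i|) * v x :=
          mul_nonneg (Finset.sum_nonneg fun _ _ => abs_nonneg _) (hvpos x).le
        have h5 : 0 < 1 * v x := by rw [one_mul]; exact hvpos x
        rw [hK]; nlinarith
      · intro i x
        rw [hpd i x]
        have h3 : |pd i c x| ≤ |Mpd i| * v x :=
          (hMpd i x).trans (mul_le_mul_of_nonneg_right (le_abs_self _) (hvpos x).le)
        have h4 : |Mpd i| ≤ ∑ j, |Mpd j| :=
          Finset.single_le_sum (fun j _ => abs_nonneg (Mpd j)) (Finset.mem_univ i)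
        have h5 : 0 ≤ (|Mc| + |πc| + 1) * v x := mul_nonneg (by positivity) (hvpos x).le
        rw [hK]; nlinarith [(hvpos x)]
    · obtain ⟨Mt, hMt⟩ := hBdd t ht
      obtain ⟨hmem, hbd⟩ := hMt c hc
      set W1 : ℝ := wnorm1 v c with hW1
      set K : ℝ := |Mt * W1| + |πc| + 1 with hK
      have hK0 : 0 < K := by rw [hK]; positivity
      have hgt : g t = fun x => kerPt P t c x - πc := by rw [hgdef]
      have hpd : ∀ i x, pd i (g t) x = pd i (kerPt P t c) x := by
        intro i x
        rw [hgt]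
        exact congrFun (congrArg _ (fderiv_sub_const πc)) _
      have hsup : ∀ x, |g t x| ≤ K * v x := by
        intro x
        rw [hgt]
        have h1 : |kerPt P t c x - πc| ≤ |kerPt P t c x| + |πc| := abs_sub _ _
        have h2 : |πc| ≤ |πc| * v x := le_mul_of_one_le_right (abs_nonneg _) (hv_one x)
        have h3 : |kerPt P t c x| ≤ |Mt * W1| * v x :=
          ((hbd x).1).trans (mul_le_mul_of_nonneg_right (le_abs_self _) (hvpos x).le)
        have h5 : 0 < 1 * v x := by rw [one_mul]; exact hvpos x
        rw [hK]; nlinarith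
      have hpdb : ∀ i x, |pd i (g t) x| ≤ K * v x := by
        intro i x
        rw [hpd i x]
        have h3 : |pd i (kerPt P t c) x| ≤ |Mt * W1| * v x :=
          ((hbd x).2 i).trans (mul_le_mul_of_nonneg_right (le_abs_self _) (hvpos x).le)
        have h5 : 0 < (|πc| + 1) * v x := mul_pos (by positivity) (hvpos x)
        rw [hK]; nlinarith
      refine ⟨⟨by rw [hgt]; exact hmem.1.sub contDiff_const, ⟨K, hsup⟩,
        fun i => ⟨K, hpdb i⟩⟩, K, hK0, hsup, hpdb⟩
  have hgmem : ∀ t, MemLw1 v (g t) := fun t => (hbase0 t).1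
  have hgcd : ∀ t, ContDiff ℝ 1 (g t) := fun t => (hgmem t).1
  have hgcont : ∀ t, Continuous (g t) := fun t => (hgcd t).continuous
  have hgdiff : ∀ t, Differentiable ℝ (g t) := fun t => (hgcd t).differentiable one_ne_zero
  have hkcont : ∀ t, Continuous (kerPt P t c) := by
    intro t
    have : kerPt P t c = fun x => g t x + πc := by
      rw [hgdef]; funext x; ring
    rw [this]
    exact (hgcont t).add continuous_const
  -- Step G : geometric decay of the sup part
  obtain ⟨B, r, hB0, hr0, hr1, hgb⟩ : ∃ B r : ℝ, 0 ≤ B ∧ 0 ≤ r ∧ r < 1 ∧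
      ∀ t x, |g t x| ≤ B * r ^ t * v x := by
    set W : ℝ := wnorm v c with hW
    have hW0 : 0 ≤ W := Real.iSup_nonneg fun x => div_nonneg (abs_nonneg _) (hvpos x).le
    have hE : ∀ t x, |g t x| ≤ b0 * ρ0 ^ t * W * v x := fun t x =>
      hErg c hcmeas ⟨Mc, hMc⟩ t x
    have hRt : ∀ t, 0 ≤ b0 * ρ0 ^ t * W := by
      intro t
      have h1 : 0 ≤ b0 * ρ0 ^ t * W * v 0 := (abs_nonneg _).trans (hE t 0)
      nlinarith [hvpos 0]
    by_cases hbρ : 0 ≤ b0 ∧ 0 ≤ ρ0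
    · refine ⟨b0 * W, ρ0, mul_nonneg hbρ.1 hW0, hbρ.2, hρ0, fun t x => ?_⟩
      calc |g t x| ≤ b0 * ρ0 ^ t * W * v x := hE t x
        _ = b0 * W * ρ0 ^ t * v x := by ring
    · have hz : b0 * W = 0 := by
        rcases not_and_or.1 hbρ with hb | hρ
        · push_neg at hb
          have h0 := hRt 0
          simp only [pow_zero, mul_one] at h0
          nlinarith
        · push_neg at hρ
          have h0 := hRt 0
          have h1 := hRt 1
          simp only [pow_zero, mul_one, pow_one] at h0 h1
          nlinarith
      refine ⟨0, 0, le_rfl, le_rfl, one_pos, fun t x => ?_⟩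
      have : b0 * ρ0 ^ t * W * v x = (b0 * W) * ρ0 ^ t * v x := by ring
      have h2 := hE t x
      rw [this, hz] at h2
      simpa using h2
  -- Step S : separability data with ε = 1/2
  obtain ⟨N, s, νp, νm, hsmem, hνfin, happ⟩ := hSep (1/2) one_half_pos
  have hsdiff : ∀ i : Fin N, Differentiable ℝ (s i) :=
    fun i => (hsmem i).1.differentiable one_ne_zero
  have hSf' : ∀ i : Fin N, ∃ S : ℝ, 0 ≤ S ∧ (∀ x, |s i x| ≤ S * v x) ∧
      ∀ j x, |pd j (s i) x| ≤ S * v x := by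
    intro i
    obtain ⟨hcd, ⟨Ms, hMs⟩, hpd⟩ := hsmem i
    choose Mj hMj using hpd
    refine ⟨|Ms| + ∑ j, |Mj j|, by positivity, fun x => ?_, fun j x => ?_⟩
    · have h2 : |s i x| ≤ |Ms| * v x :=
        (hMs x).trans (mul_le_mul_of_nonneg_right (le_abs_self _) (hvpos x).le)
      nlinarith [mul_nonneg (Finset.sum_nonneg fun j (_ : j ∈ Finset.univ) =>
        abs_nonneg (Mj j)) (hvpos x).le]
    · have h2 : |pd j (s i) x| ≤ |Mj j| * v x :=
        (hMj j x).trans (mul_le_mul_of_nonneg_right (le_abs_self _) (hvpos x).le)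
      have h3 : |Mj j| ≤ ∑ j', |Mj j'| :=
        Finset.single_le_sum (fun j' _ => abs_nonneg (Mj j')) (Finset.mem_univ j)
      nlinarith [abs_nonneg Ms, hvpos x]
  choose Sf hSf0 hSfs hSfpd using hSf'
  set Vν : Fin N → ℝ := fun i =>
    ((∫⁻ x, ENNReal.ofReal (v x) ∂(νp i)) + ∫⁻ x, ENNReal.ofReal (v x) ∂(νm i)).toReal
    with hVνdef
  have hVν0 : ∀ i, 0 ≤ Vν i := fun i => ENNReal.toReal_nonneg
  have hνbound : ∀ (i : Fin N) (F : (Fin ℓ → ℝ) → ℝ), Continuous F → ∀ K : ℝ, 0 ≤ K →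
      (∀ y, |F y| ≤ K * v y) →
      |(∫ y, F y ∂νp i) - ∫ y, F y ∂νm i| ≤ K * Vν i := by
    intro i F hFc K hK hb
    obtain ⟨hfp, hfm, hlp, hlm⟩ := hνfin i
    have habs : ∀ (μ : Measure (Fin ℓ → ℝ)), (∫⁻ x, ENNReal.ofReal (v x) ∂μ) ≠ ⊤ →
        |∫ y, F y ∂μ| ≤ K * (∫⁻ x, ENNReal.ofReal (v x) ∂μ).toReal := by
      intro μ hμ
      have hintF : Integrable F μ := integrable_of_wbound hFc.aestronglyMeasurable hvm K hK hb hμ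
      have hintv : Integrable v μ := integrable_of_wbound hv_cont.aestronglyMeasurable hvm 1
        zero_le_one (fun x => by rw [abs_of_pos (hvpos x), one_mul]) hμ
      have h1 : |∫ y, F y ∂μ| ≤ ∫ y, |F y| ∂μ := by
        simpa [Real.norm_eq_abs] using norm_integral_le_integral_norm (μ := μ) F
      have h2 : ∫ y, |F y| ∂μ ≤ ∫ y, K * v y ∂μ := integral_mono hintF.abs (hintv.const_mul K) hb
      have h3 : ∫ y, K * v y ∂μ = K * ∫ y, v y ∂μ := integral_const_mul K v
      have h4 : ∫ y, v y ∂μ = (∫⁻ x, ENNReal.ofReal (v x) ∂μ).toReal :=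
        integral_eq_lintegral_of_nonneg_ae (Eventually.of_forall fun y => (hvpos y).le)
          hv_cont.aestronglyMeasurable
      rw [← h4]
      linarith
    have h5 := habs (νp i) hlp
    have h6 := habs (νm i) hlm
    have h7 : |(∫ y, F y ∂νp i) - ∫ y, F y ∂νm i| ≤ |∫ y, F y ∂νp i| + |∫ y, F y ∂νm i| :=
      abs_sub _ _
    have h8 : Vν i = (∫⁻ x, ENNReal.ofReal (v x) ∂νp i).toReal
        + (∫⁻ x, ENNReal.ofReal (v x) ∂νm i).toReal := by
      rw [hVνdef]
      exact ENNReal.toReal_add hlp hlm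
    rw [h8]
    linarith
  set C : ℝ := B * ∑ i, Sf i * Vν i with hCdef
  have hC0 : 0 ≤ C := by
    rw [hCdef]
    exact mul_nonneg hB0 (Finset.sum_nonneg fun i _ => mul_nonneg (hSf0 i) (hVν0 i))
  -- Step R : the contraction-type recursion
  have hrec : ∀ (t : ℕ) (K : ℝ), 0 < K → (∀ x, |g t x| ≤ K * v x) →
      (∀ i x, |pd i (g t) x| ≤ K * v x) →
      (∀ x, |g (t + t1) x| ≤ ((1/2) * K + C * r ^ t) * v x) ∧
      (∀ j x, |pd j (g (t + t1)) x| ≤ ((1/2) * K + C * r ^ t) * v x) := by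
    intro t K hK hb hbd
    have hKinv : 0 < K⁻¹ := inv_pos.2 hK
    set f : (Fin ℓ → ℝ) → ℝ := fun z => K⁻¹ * g t z with hfdef
    have hfc : Continuous f := continuous_const.mul (hgcont t)
    have hfcd : ContDiff ℝ 1 f := contDiff_const.mul (hgcd t)
    have hpdf : ∀ j x, pd j f x = K⁻¹ * pd j (g t) x := by
      intro j x
      show fderiv ℝ f x (Pi.single j 1) = _
      rw [hfdef, fderiv_const_mul (hgdiff t x)]
      simp [pd, smul_eq_mul]
    have hf1 : ∀ z, |f z| ≤ v z := by
      intro z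
      rw [hfdef]
      simp only []
      rw [abs_mul, abs_of_pos hKinv]
      calc K⁻¹ * |g t z| ≤ K⁻¹ * (K * v z) := mul_le_mul_of_nonneg_left (hb z) hKinv.le
        _ = v z := by field_simp
    have hf2 : ∀ j z, |pd j f z| ≤ v z := by
      intro j z
      rw [hpdf j z, abs_mul, abs_of_pos hKinv]
      calc K⁻¹ * |pd j (g t) z| ≤ K⁻¹ * (K * v z) :=
            mul_le_mul_of_nonneg_left (hbd j z) hKinv.le
        _ = v z := by field_simp
    have hfmem : MemLw1 v f := ⟨hfcd, ⟨1, fun z => by rw [one_mul]; exact hf1 z⟩,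
      fun j => ⟨1, fun z => by rw [one_mul]; exact hf2 j z⟩⟩
    have happx := happ f hfmem hf1 hf2
    -- the key identity
    have hcbound : ∀ y, |kerPt P t c y| ≤ (K + |πc|) * v y := by
      intro y
      have h1 : |g t y| ≤ K * v y := hb y
      have h2 : |πc| ≤ |πc| * v y := le_mul_of_one_le_right (abs_nonneg _) (hv_one y)
      have h3 : kerPt P t c y = g t y + πc := by rw [hgdef]; ring
      rw [h3]
      calc |g t y + πc| ≤ |g t y| + |πc| := abs_add_le _ _
        _ ≤ (K + |πc|) * v y := by nlinarith
    have hPf : kerPt P t1 f = fun z => K⁻¹ * g (t + t1) z := by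
      funext z
      show ∫ y, f y ∂(kerIter P t1 z) = _
      have h1 : ∫ y, f y ∂(kerIter P t1 z) = K⁻¹ * ∫ y, g t y ∂(kerIter P t1 z) := by
        rw [hfdef]
        exact integral_const_mul _ _
      have hint1 : Integrable (kerPt P t c) (kerIter P t1 z) :=
        hker_int (kerPt P t c) (hkcont t) (K + |πc|) (by positivity) hcbound t1 z
      have h2 : ∫ y, g t y ∂(kerIter P t1 z) = kerPt P (t + t1) c z - πc := by
        have h3 : ∫ y, g t y ∂(kerIter P t1 z)
            = (∫ y, kerPt P t c y ∂(kerIter P t1 z)) - πc := by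
          rw [hgdef]
          rw [integral_sub hint1 (integrable_const πc), integral_const]
          simp [measure_univ]
        rw [h3, ← hchap t t1 c hccont (|Mc|) (abs_nonneg Mc) (fun y => (hMc y).trans
          (mul_le_mul_of_nonneg_right (le_abs_self _) (hvpos y).le)) z]
      rw [h1, h2]
    -- bounds on the coefficients
    have hd : ∀ i : Fin N, |(∫ y, f y ∂νp i) - ∫ y, f y ∂νm i|
        ≤ K⁻¹ * (B * r ^ t) * Vν i := by
      intro i
      refine hνbound i f hfc (K⁻¹ * (B * r ^ t)) (by positivity) fun y => ?_
      rw [hfdef]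
      simp only []
      rw [abs_mul, abs_of_pos hKinv]
      calc K⁻¹ * |g t y| ≤ K⁻¹ * (B * r ^ t * v y) :=
            mul_le_mul_of_nonneg_left (hgb t y) hKinv.le
        _ = K⁻¹ * (B * r ^ t) * v y := by ring
    have hsumb : ∀ x, |∑ i, s i x * ((∫ y, f y ∂νp i) - ∫ y, f y ∂νm i)|
        ≤ K⁻¹ * C * r ^ t * v x := by
      intro x
      calc |∑ i, s i x * ((∫ y, f y ∂νp i) - ∫ y, f y ∂νm i)|
          ≤ ∑ i, |s i x * ((∫ y, f y ∂νp i) - ∫ y, f y ∂νm i)| :=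
            Finset.abs_sum_le_sum_abs _ _
        _ ≤ ∑ i, Sf i * v x * (K⁻¹ * (B * r ^ t) * Vν i) := by
            refine Finset.sum_le_sum fun i _ => ?_
            rw [abs_mul]
            exact mul_le_mul (hSfs i x) (hd i) (abs_nonneg _)
              (mul_nonneg (hSf0 i) (hvpos x).le)
        _ = K⁻¹ * C * r ^ t * v x := by
            have hsum : ∑ i, Sf i * v x * (K⁻¹ * (B * r ^ t) * Vν i)
                = (∑ i, Sf i * Vν i) * (v x * (K⁻¹ * (B * r ^ t))) := by
              rw [Finset.sum_mul]
              exact Finset.sum_congr rfl fun i _ => by ring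
            rw [hsum, hCdef]
            ring
    constructor
    · intro x
      have h1 := (happx x).1
      have heq : g (t + t1) x = K * kerPt P t1 f x := by
        have h2 := congrFun hPf x
        rw [h2]
        field_simp
      rw [heq, abs_mul, abs_of_pos hK]
      have h3 : |kerPt P t1 f x| ≤ 1/2 * v x + K⁻¹ * C * r ^ t * v x := by
        have h4 : |kerPt P t1 f x|
            ≤ |kerPt P t1 f x - ∑ i, s i x * ((∫ y, f y ∂νp i) - ∫ y, f y ∂νm i)|
              + |∑ i, s i x * ((∫ y, f y ∂νp i) - ∫ y, f y ∂νm i)| := by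
          have := abs_add_le (kerPt P t1 f x
            - ∑ i, s i x * ((∫ y, f y ∂νp i) - ∫ y, f y ∂νm i))
            (∑ i, s i x * ((∫ y, f y ∂νp i) - ∫ y, f y ∂νm i))
          simpa using this
        exact h4.trans (add_le_add h1 (hsumb x))
      calc K * |kerPt P t1 f x| ≤ K * (1/2 * v x + K⁻¹ * C * r ^ t * v x) :=
            mul_le_mul_of_nonneg_left h3 hK.le
        _ = ((1/2) * K + (K * K⁻¹) * C * r ^ t) * v x := by ring
        _ = ((1/2) * K + C * r ^ t) * v x := by
            rw [mul_inv_cancel₀ hK.ne', one_mul]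
    · intro j x
      have h1 := (happx x).2 j
      -- identify the derivative of the approximation error
      have hΨ : HasFDerivAt
          (fun z => ∑ i, s i z * ((∫ y, f y ∂νp i) - ∫ y, f y ∂νm i))
          (∑ i, ((∫ y, f y ∂νp i) - ∫ y, f y ∂νm i) • fderiv ℝ (s i) x) x := by
        refine HasFDerivAt.fun_sum fun i _ => ?_
        exact (hsdiff i x).hasFDerivAt.mul_const _
      have hΦd : DifferentiableAt ℝ (kerPt P t1 f) x := by
        rw [hPf]
        exact (hgdiff (t + t1) x).const_mul _
      have hsub := hΦd.hasFDerivAt.fun_sub hΨ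
      have hpdsub : pd j (fun z => kerPt P t1 f z
            - ∑ i, s i z * ((∫ y, f y ∂νp i) - ∫ y, f y ∂νm i)) x
          = pd j (kerPt P t1 f) x
            - ∑ i, ((∫ y, f y ∂νp i) - ∫ y, f y ∂νm i) * pd j (s i) x := by
        show fderiv ℝ _ x (Pi.single j 1) = _
        rw [hsub.fderiv]
        simp [pd, smul_eq_mul]
      have hpdΦ : pd j (kerPt P t1 f) x = K⁻¹ * pd j (g (t + t1)) x := by
        rw [hPf]
        show fderiv ℝ (fun z => K⁻¹ * g (t + t1) z) x (Pi.single j 1) = _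
        rw [fderiv_const_mul (hgdiff (t + t1) x)]
        simp [pd, smul_eq_mul]
      have hΨb : |∑ i, ((∫ y, f y ∂νp i) - ∫ y, f y ∂νm i) * pd j (s i) x|
          ≤ K⁻¹ * C * r ^ t * v x := by
        calc |∑ i, ((∫ y, f y ∂νp i) - ∫ y, f y ∂νm i) * pd j (s i) x|
            ≤ ∑ i, |((∫ y, f y ∂νp i) - ∫ y, f y ∂νm i) * pd j (s i) x| :=
              Finset.abs_sum_le_sum_abs _ _
          _ ≤ ∑ i, (K⁻¹ * (B * r ^ t) * Vν i) * (Sf i * v x) := by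
              refine Finset.sum_le_sum fun i _ => ?_
              rw [abs_mul]
              exact mul_le_mul (hd i) (hSfpd i j x) (abs_nonneg _)
                (by positivity)
          _ = K⁻¹ * C * r ^ t * v x := by
              have hsum : ∑ i, (K⁻¹ * (B * r ^ t) * Vν i) * (Sf i * v x)
                  = (∑ i, Sf i * Vν i) * (v x * (K⁻¹ * (B * r ^ t))) := by
                rw [Finset.sum_mul]
                exact Finset.sum_congr rfl fun i _ => by ring
              rw [hsum, hCdef]
              ring
      have h5 : |pd j (kerPt P t1 f) x| ≤ 1/2 * v x + K⁻¹ * C * r ^ t * v x := by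
        have h4 : |pd j (kerPt P t1 f) x|
            ≤ |pd j (kerPt P t1 f) x
                - ∑ i, ((∫ y, f y ∂νp i) - ∫ y, f y ∂νm i) * pd j (s i) x|
              + |∑ i, ((∫ y, f y ∂νp i) - ∫ y, f y ∂νm i) * pd j (s i) x| := by
          have := abs_add_le (pd j (kerPt P t1 f) x
            - ∑ i, ((∫ y, f y ∂νp i) - ∫ y, f y ∂νm i) * pd j (s i) x)
            (∑ i, ((∫ y, f y ∂νp i) - ∫ y, f y ∂νm i) * pd j (s i) x)
          simpa using this
        rw [← hpdsub] at h4
        exact h4.trans (add_le_add h1 hΨb)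
      have heq : pd j (g (t + t1)) x = K * pd j (kerPt P t1 f) x := by
        rw [hpdΦ]
        field_simp
      rw [heq, abs_mul, abs_of_pos hK]
      calc K * |pd j (kerPt P t1 f) x| ≤ K * (1/2 * v x + K⁻¹ * C * r ^ t * v x) :=
            mul_le_mul_of_nonneg_left h5 hK.le
        _ = ((1/2) * K + (K * K⁻¹) * C * r ^ t) * v x := by ring
        _ = ((1/2) * K + C * r ^ t) * v x := by
            rw [mul_inv_cancel₀ hK.ne', one_mul]
  -- Step A' : the summable sequence of bounds
  set base : ℕ → ℝ := fun t => (hbase0 t).2.choose with hbasedef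
  have hbase_spec : ∀ t, 0 < base t ∧ (∀ x, |g t x| ≤ base t * v x) ∧
      ∀ i x, |pd i (g t) x| ≤ base t * v x := fun t => (hbase0 t).2.choose_spec
  set A : ℕ → ℝ := seqA base t1 C r with hAdef
  have hApos : ∀ t, 0 < A t := seqA_pos (fun t => (hbase_spec t).1) hC0 hr0
  have hAsum : Summable A := seqA_summable (fun t => (hbase_spec t).1.le) ht1 hC0 hr0 hr1
  have hAb : ∀ t, (∀ x, |g t x| ≤ A t * v x) ∧ ∀ i x, |pd i (g t) x| ≤ A t * v x := by
    intro t
    induction t using Nat.strong_induction_on with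
    | _ t ih =>
      by_cases ht : t < t1
      · have hAt : A t = base t := seqA_lt ht
        rw [hAt]
        exact ⟨(hbase_spec t).2.1, (hbase_spec t).2.2⟩
      · push_neg at ht
        have ht' : t - t1 < t := by omega
        have hstep := hrec (t - t1) (A (t - t1)) (hApos _) (ih _ ht').1 (ih _ ht').2
        have h3 : (t - t1) + t1 = t := by omega
        have heq : A t = (1/2) * A (t - t1) + C * r ^ (t - t1) := by
          conv_lhs => rw [← h3]
          exact seqA_add ht1 _
        rw [heq]
        constructor
        · intro x
          have := hstep.1 x
          rwa [h3] at this
        · intro i x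
          have := hstep.2 i x
          rwa [h3] at this
  -- Part 1 : pointwise summability
  have hsum1 : ∀ x, Summable fun t : ℕ => g t x := by
    intro x
    have habs : Summable (fun t => |g t x|) :=
      Summable.of_nonneg_of_le (fun t => abs_nonneg _) (fun t => (hAb t).1 x)
        (hAsum.mul_right (v x))
    exact summable_abs_iff.1 habs
  refine ⟨fun x => hsum1 x, ?_⟩
  intro h
  -- the series of derivatives
  set F' : ℕ → (Fin ℓ → ℝ) → ((Fin ℓ → ℝ) →L[ℝ] ℝ) := fun t x => fderiv ℝ (g t) x with hF'def
  have hF'cont : ∀ t, Continuous (F' t) := fun t => (hgcd t).continuous_fderiv one_ne_zero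
  have hF'norm : ∀ t x, ‖F' t x‖ ≤ (ℓ : ℝ) * A t * v x := by
    intro t x
    refine (opnorm_le_sum_pd (F' t x)).trans ?_
    have hone : ∀ i : Fin ℓ, |F' t x (Pi.single i 1)| ≤ A t * v x := fun i => (hAb t).2 i x
    calc ∑ i, |F' t x (Pi.single i 1)| ≤ ∑ _i : Fin ℓ, A t * v x :=
          Finset.sum_le_sum fun i _ => hone i
      _ = (ℓ : ℝ) * A t * v x := by
          rw [Finset.sum_const, Finset.card_univ, Fintype.card_fin, nsmul_eq_mul]
          ring
  have hℓA : Summable (fun t => (ℓ : ℝ) * A t) := hAsum.mul_left _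
  have hF'sum : ∀ x, Summable fun t => F' t x := by
    intro x
    refine Summable.of_norm ?_
    exact Summable.of_nonneg_of_le (fun t => norm_nonneg _) (fun t => hF'norm t x)
      (hℓA.mul_right (v x))
  set G' : (Fin ℓ → ℝ) → ((Fin ℓ → ℝ) →L[ℝ] ℝ) := fun x => ∑' t, F' t x with hG'def
  have hVmloc : ∀ x0 : Fin ℓ → ℝ, ∃ Vm : ℝ, ∀ y ∈ Metric.ball x0 1, v y ≤ Vm := by
    intro x0
    obtain ⟨z, hz, hzmax⟩ := (isCompact_closedBall x0 1).exists_isMaxOn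
      ⟨x0, Metric.mem_closedBall_self zero_le_one⟩ hv_cont.continuousOn
    exact ⟨v z, fun y hy => hzmax (Metric.ball_subset_closedBall hy)⟩
  have hunifloc : ∀ x0 : Fin ℓ → ℝ,
      TendstoUniformlyOn (fun (n : Finset ℕ) x => ∑ t ∈ n, F' t x) G' atTop
        (Metric.ball x0 1) := by
    intro x0
    obtain ⟨Vm, hVm⟩ := hVmloc x0
    refine tendstoUniformlyOn_tsum (u := fun t => (ℓ : ℝ) * A t * Vm)
      ((hℓA.mul_right Vm).congr fun t => by ring) fun t y hy => ?_
    refine (hF'norm t y).trans ?_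
    have hnn : 0 ≤ (ℓ : ℝ) * A t := mul_nonneg (Nat.cast_nonneg ℓ) (hApos t).le
    calc (ℓ : ℝ) * A t * v y ≤ (ℓ : ℝ) * A t * Vm :=
          mul_le_mul_of_nonneg_left (hVm y hy) hnn
      _ = (ℓ : ℝ) * A t * Vm := rfl
  have hHD : ∀ x, HasFDerivAt h (G' x) x := by
    intro x0
    refine hasFDerivAt_of_tendstoUniformlyOn Metric.isOpen_ball (hunifloc x0)
      (fun n y hy => HasFDerivAt.sum fun t _ => (hgdiff t y).hasFDerivAt)
      (fun y hy => by have := (hsum1 y).hasSum; simp only [Finset.sum_apply]; exact this) (Metric.mem_ball_self one_pos)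
  have hdiffh : Differentiable ℝ h := fun x => (hHD x).differentiableAt
  have hfderivh : ∀ x, fderiv ℝ h x = G' x := fun x => (hHD x).fderiv
  have hpdh : ∀ (x : Fin ℓ → ℝ) (i : Fin ℓ),
      HasSum (fun t => pd i (g t) x) (pd i h x) := by
    intro x i
    have h1 : HasSum (fun t => F' t x) (G' x) := (hF'sum x).hasSum
    have h2 := h1.mapL (ContinuousLinearMap.apply ℝ ℝ (Pi.single i 1 : Fin ℓ → ℝ))
    have h3 : pd i h x = G' x (Pi.single i 1) := by
      show fderiv ℝ h x (Pi.single i 1) = _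
      rw [hfderivh x]
    rw [h3]
    exact h2
  have hcontfder : Continuous (fderiv ℝ h) := by
    rw [show fderiv ℝ h = G' from funext hfderivh]
    rw [continuous_iff_continuousAt]
    intro x0
    have hcont : ContinuousOn G' (Metric.ball x0 1) :=
      (hunifloc x0).continuousOn (Eventually.frequently (Eventually.of_forall fun n =>
        (continuous_finset_sum _ fun t _ => hF'cont t).continuousOn))
    exact hcont.continuousAt (Metric.isOpen_ball.mem_nhds (Metric.mem_ball_self one_pos))
  have hcd : ContDiff ℝ 1 h := contDiff_one_iff_fderiv.2 ⟨hdiffh, hcontfder⟩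
  set SA : ℝ := ∑' t, A t with hSAdef
  have hhb : ∀ x, |h x| ≤ SA * v x := by
    intro x
    have habs : Summable (fun t => |g t x|) :=
      Summable.of_nonneg_of_le (fun t => abs_nonneg _) (fun t => (hAb t).1 x)
        (hAsum.mul_right (v x))
    have h1 : |h x| ≤ ∑' t, |g t x| := by
      have := norm_tsum_le_tsum_norm (f := fun t => g t x)
        (by simpa [Real.norm_eq_abs] using habs)
      simpa [Real.norm_eq_abs] using this
    have h2 : ∑' t, |g t x| ≤ ∑' t, A t * v x :=
      Summable.tsum_le_tsum (fun t => (hAb t).1 x) habs (hAsum.mul_right (v x))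
    have h3 : ∑' t, A t * v x = SA * v x := tsum_mul_right
    linarith
  have hpdb : ∀ (i : Fin ℓ) x, |pd i h x| ≤ SA * v x := by
    intro i x
    have habs : Summable (fun t => |pd i (g t) x|) :=
      Summable.of_nonneg_of_le (fun t => abs_nonneg _) (fun t => (hAb t).2 i x)
        (hAsum.mul_right (v x))
    have h0 : pd i h x = ∑' t, pd i (g t) x := (hpdh x i).tsum_eq.symm
    have h1 : |pd i h x| ≤ ∑' t, |pd i (g t) x| := by
      rw [h0]
      have := norm_tsum_le_tsum_norm (f := fun t => pd i (g t) x)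
        (by simpa [Real.norm_eq_abs] using habs)
      simpa [Real.norm_eq_abs] using this
    have h2 : ∑' t, |pd i (g t) x| ≤ ∑' t, A t * v x :=
      Summable.tsum_le_tsum (fun t => (hAb t).2 i x) habs (hAsum.mul_right (v x))
    have h3 : ∑' t, A t * v x = SA * v x := tsum_mul_right
    linarith
  refine ⟨⟨hcd, ⟨SA, hhb⟩, fun i => ⟨SA, hpdb i⟩⟩, ?_, ?_⟩
  -- Poisson's equation
  · intro x
    have hPx : (P x : Measure (Fin ℓ → ℝ)) = kerIter P 1 x := by rw [kerIter_one]
    have hVP : ∫⁻ y, ENNReal.ofReal (v y) ∂(P x) ≠ ⊤ := by rw [hPx]; exact hVfin 1 x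
    have hswap : ∫ y, h y ∂(P x) = ∑' t, ∫ y, g t y ∂(P x) := by
      have hhyeq : (fun y => h y) = fun y => ∑' t, g t y := rfl
      rw [hhyeq]
      refine integral_tsum (fun t => (hgcont t).aestronglyMeasurable) ?_
      have hb : ∀ t, ∫⁻ y, ‖g t y‖₊ ∂(P x)
          ≤ ENNReal.ofReal (A t) * ∫⁻ y, ENNReal.ofReal (v y) ∂(P x) := by
        intro t
        rw [← lintegral_const_mul _ hvm.ennreal_ofReal]
        refine lintegral_mono fun y => ?_
        rw [← enorm_eq_nnnorm, ← ofReal_norm, Real.norm_eq_abs, ← ENNReal.ofReal_mul (hApos t).le]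
        exact ENNReal.ofReal_le_ofReal ((hAb t).1 y)
      refine ne_top_of_le_ne_top ?_ (ENNReal.tsum_le_tsum hb)
      rw [ENNReal.tsum_mul_right]
      refine ENNReal.mul_ne_top ?_ hVP
      rw [← ENNReal.ofReal_tsum_of_nonneg (fun t => (hApos t).le) hAsum]
      exact ENNReal.ofReal_ne_top
    have hstep : ∀ t, ∫ y, g t y ∂(P x) = g (t + 1) x := by
      intro t
      have hint1 : Integrable (kerPt P t c) (P x) := by
        rw [hPx]
        refine hker_int (kerPt P t c) (hkcont t) (A t + |πc|)
          (add_nonneg (hApos t).le (abs_nonneg _)) (fun y => ?_) 1 x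
        have h1 : |g t y| ≤ A t * v y := (hAb t).1 y
        have h2 : |πc| ≤ |πc| * v y := le_mul_of_one_le_right (abs_nonneg _) (hv_one y)
        have h3 : kerPt P t c y = g t y + πc := by rw [hgdef]; ring
        rw [h3]
        calc |g t y + πc| ≤ |g t y| + |πc| := abs_add_le _ _
          _ ≤ (A t + |πc|) * v y := by nlinarith
      have h1 : ∫ y, g t y ∂(P x) = (∫ y, kerPt P t c y ∂(P x)) - πc := by
        rw [hgdef]
        rw [integral_sub hint1 (integrable_const πc), integral_const]
        simp [measure_univ]
      have h2 : ∫ y, kerPt P t c y ∂(P x) = kerPt P (t + 1) c x := by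
        have h3 := hchap t 1 c hccont (|Mc|) (abs_nonneg Mc) (fun y => (hMc y).trans
          (mul_le_mul_of_nonneg_right (le_abs_self _) (hvpos y).le)) x
        rw [h3, kerIter_one]
      rw [h1, h2]
    have hhx : h x = ∑' t, g t x := rfl
    have hshift : ∑' t, g t x = g 0 x + ∑' t, g (t + 1) x := Summable.tsum_eq_zero_add (hsum1 x)
    have hg0 : g 0 x = c x - πc := by
      have := congrFun (hker0 c hccont) x
      rw [hgdef]
      simpa using congrArg (fun z => z - πc) this
    rw [hswap, tsum_congr hstep, hhx, hshift, hg0]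
    ring
  -- the derivative series
  · intro x i
    have h1 := hpdh x i
    have h2 : (fun t => pd i (kerPt P t c) x) = fun t => pd i (g t) x := by
      funext t
      show fderiv ℝ (kerPt P t c) x (Pi.single i 1) = fderiv ℝ (g t) x (Pi.single i 1)
      rw [hgdef]
      exact (congrFun (congrArg _ (fderiv_sub_const πc)) _).symm
    rw [h2]
    exact h1
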